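/- arXiv:2502.00601 — 7 statements merged into one kernel-verified Lean document; each statement's English description precedes it below -/
import Mathlib

section
/- Let (X,U,p,r,γ) be a finite MDP and let π′ and π̃ be two policies whose state–action value functions Q^{π′} and Q^{π̃} satisfy their respective Bellman equations, with value functions V^{π′}, V^{π̃} and advantage function A^{π̃}. Let μ be a probability mass function on X and let d_{π′} be the discounted state visitation distribution of π′ with initial distribution μ. Then (1−γ) · Σ_{x∈X} μ(x) (V^{π′}(x) − V^{π̃}(x)) = Σ_{x∈X} d_{π′}(x) Σ_{u∈U} π′(u|x) A^{π̃}(x,u). (Performance difference lemma, equality part of Lemma 1.) -/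
open Finset

/-!
Both sides are linear in `Δ := V^{π'} - V^{π̃}`. Subtracting the two Bellman equations gives
`Q^{π'}(x,u) - Q^{π̃}(x,u) = γ Σ_{x'} p(x'|x,u) Δ(x')`, so averaging `A^{π̃}(x, ·)` under `π'`
yields `Δ - γ P_{π'} Δ`, where `P_{π'}` is the state transition matrix under `π'`. Pairing this
with `d` and moving `P_{π'}` onto `d` turns `d - γ d P_{π'}` into `(1 - γ) μ` by the flow
equation of the visitation distribution.
-/

namespace MDP

variable {X U : Type*} [Fintype X] [Fintype U]

def value (π Q : X → U → ℝ) (x : X) : ℝ := ∑ u, π x u * Q x u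

lemma sum_mul_sub_const {w : U → ℝ} (hw : ∑ u, w u = 1) (f : U → ℝ) (c : ℝ) :
    ∑ u, w u * (f u - c) = ∑ u, w u * f u - c := by
  simp only [mul_sub, sum_sub_distrib, ← sum_mul, hw, one_mul]

lemma sub_eq_of_bellman {γ : ℝ} {p : X → U → X → ℝ} {r : X → U → ℝ} {π₁ π₂ Q₁ Q₂ : X → U → ℝ}
    (hQ₁ : ∀ x u, Q₁ x u = r x u + γ * ∑ x', p x u x' * value π₁ Q₁ x')
    (hQ₂ : ∀ x u, Q₂ x u = r x u + γ * ∑ x', p x u x' * value π₂ Q₂ x') (x : X) (u : U) :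
    Q₁ x u - Q₂ x u = γ * ∑ x', p x u x' * (value π₁ Q₁ x' - value π₂ Q₂ x') := by
  rw [hQ₁, hQ₂]
  simp only [mul_sub, sum_sub_distrib]
  ring

lemma sum_mul_advantage_eq {γ : ℝ} {p : X → U → X → ℝ} {r : X → U → ℝ}
    {π₁ π₂ Q₁ Q₂ : X → U → ℝ} (hπ₁ : ∀ x, ∑ u, π₁ x u = 1)
    (hQ₁ : ∀ x u, Q₁ x u = r x u + γ * ∑ x', p x u x' * value π₁ Q₁ x')
    (hQ₂ : ∀ x u, Q₂ x u = r x u + γ * ∑ x', p x u x' * value π₂ Q₂ x') (x : X) :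
    ∑ u, π₁ x u * (Q₂ x u - value π₂ Q₂ x) =
      (value π₁ Q₁ x - value π₂ Q₂ x) -
        γ * ∑ u, π₁ x u * ∑ x', p x u x' * (value π₁ Q₁ x' - value π₂ Q₂ x') := by
  have hdiff : value π₁ Q₁ x - ∑ u, π₁ x u * Q₂ x u =
      γ * ∑ u, π₁ x u * ∑ x', p x u x' * (value π₁ Q₁ x' - value π₂ Q₂ x') := by
    rw [value, ← sum_sub_distrib, mul_sum]
    simp only [← mul_sub, sub_eq_of_bellman hQ₁ hQ₂, mul_left_comm]
  rw [sum_mul_sub_const (hπ₁ x)]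
  linarith

lemma sum_mul_sub_discounted_transition_adjoint (γ : ℝ) (p : X → U → X → ℝ) (π : X → U → ℝ) (d f : X → ℝ) :
    ∑ x, d x * (f x - γ * ∑ u, π x u * ∑ x', p x u x' * f x') =
      ∑ x', (d x' - γ * ∑ x, ∑ u, d x * π x u * p x u x') * f x' := by
  have hstep : ∑ x, d x * ∑ u, π x u * ∑ x', p x u x' * f x' =
      ∑ x', (∑ x, ∑ u, d x * π x u * p x u x') * f x' := by
    simp only [mul_sum, sum_mul]
    conv_rhs => rw [sum_comm]; enter [2, x]; rw [sum_comm]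
    exact sum_congr rfl fun _ _ => sum_congr rfl fun _ _ => sum_congr rfl fun _ _ => by ring
  simp only [mul_sub, sub_mul, sum_sub_distrib, mul_left_comm (d _) γ, mul_assoc γ, ← mul_sum,
    hstep]

end MDP

open MDP in
theorem performance_difference_lemma_general
    {X U : Type*} [Fintype X] [Fintype U]
    (γ : ℝ)
    (p : X → U → X → ℝ)
    (r : X → U → ℝ)
    (π' πt : X → U → ℝ)
    (hπ'_sum : ∀ x, ∑ u, π' x u = 1)
    (Q' Qt : X → U → ℝ)
    (hQ' : ∀ x u, Q' x u = r x u + γ * ∑ x', p x u x' * ∑ u', π' x' u' * Q' x' u')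
    (hQt : ∀ x u, Qt x u = r x u + γ * ∑ x', p x u x' * ∑ u', πt x' u' * Qt x' u')
    (μ : X → ℝ)
    (d : X → ℝ)
    (hd_flow : ∀ x', d x' = (1 - γ) * μ x' + γ * ∑ x, ∑ u, d x * π' x u * p x u x') :
    (1 - γ) * ∑ x, μ x * ((∑ u, π' x u * Q' x u) - (∑ u, πt x u * Qt x u)) =
      ∑ x, d x * ∑ u, π' x u * (Qt x u - ∑ u', πt x u' * Qt x u') := by
  have hμ : ∀ x', (1 - γ) * μ x' = d x' - γ * ∑ x, ∑ u, d x * π' x u * p x u x' := fun x' => by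
    linarith [hd_flow x']
  calc (1 - γ) * ∑ x, μ x * (value π' Q' x - value πt Qt x)
      = ∑ x, (d x - γ * ∑ y, ∑ u, d y * π' y u * p y u x) * (value π' Q' x - value πt Qt x) := by
        simp only [mul_sum, ← mul_assoc, hμ]
    _ = ∑ x, d x * ∑ u, π' x u * (Qt x u - value πt Qt x) := by
        rw [← sum_mul_sub_discounted_transition_adjoint]
        simp only [sum_mul_advantage_eq hπ'_sum hQ' hQt]

/-- **Performance difference lemma (equality part of Lemma 1).**
For a finite MDP `(X, U, p, r, γ)`, two policies `π'` and `π̃` with state–action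
value functions `Q'`, `Qt` satisfying their Bellman equations, value functions
`V^π(x) = Σ_u π(u|x) Q^π(x,u)`, advantage `A^π̃(x,u) = Qt(x,u) − V^π̃(x)`,
an initial distribution `μ`, and `d` the discounted state visitation distribution
of `π'`, we have
`(1−γ) Σ_x μ(x) (V^{π'}(x) − V^{π̃}(x)) = Σ_x d(x) Σ_u π'(u|x) A^{π̃}(x,u)`. -/
theorem performance_difference_lemma
    {X U : Type*} [Fintype X] [Fintype U] [Nonempty X] [Nonempty U]
    (γ : ℝ) (hγ0 : 0 ≤ γ) (hγ1 : γ < 1)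
    (p : X → U → X → ℝ)
    (hp_nonneg : ∀ x u x', 0 ≤ p x u x')
    (hp_sum : ∀ x u, ∑ x', p x u x' = 1)
    (r : X → U → ℝ)
    (π' πt : X → U → ℝ)
    (hπ'_nonneg : ∀ x u, 0 ≤ π' x u) (hπ'_sum : ∀ x, ∑ u, π' x u = 1)
    (hπt_nonneg : ∀ x u, 0 ≤ πt x u) (hπt_sum : ∀ x, ∑ u, πt x u = 1)
    (Q' Qt : X → U → ℝ)
    (hQ' : ∀ x u, Q' x u = r x u + γ * ∑ x', p x u x' * ∑ u', π' x' u' * Q' x' u')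
    (hQt : ∀ x u, Qt x u = r x u + γ * ∑ x', p x u x' * ∑ u', πt x' u' * Qt x' u')
    (μ : X → ℝ) (hμ_nonneg : ∀ x, 0 ≤ μ x) (hμ_sum : ∑ x, μ x = 1)
    (d : X → ℝ)
    (hd_flow : ∀ x', d x' = (1 - γ) * μ x' + γ * ∑ x, ∑ u, d x * π' x u * p x u x')
    (hd_nonneg : ∀ x, 0 ≤ d x) (hd_sum : ∑ x, d x = 1) :
    (1 - γ) * ∑ x, μ x * ((∑ u, π' x u * Q' x u) - (∑ u, πt x u * Qt x u)) =
      ∑ x, d x * ∑ u, π' x u * (Qt x u - ∑ u', πt x u' * Qt x u') :=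
  performance_difference_lemma_general γ p r π' πt hπ'_sum Q' Qt hQ' hQt μ d hd_flow
end

section
/- Let (X,U,p,r,γ) be a finite MDP with rewards satisfying 0 ≤ r(x,u) ≤ 1 for all (x,u), and let π′ and π̃ be two policies whose state–action value functions satisfy their Bellman equations, with A^{π̃} the advantage function of π̃. Let μ be a probability mass function on X and d_{π′} the discounted state visitation distribution of π′ with initial distribution μ. Then Σ_{x∈X} d_{π′}(x) Σ_{u∈U} π′(u|x) A^{π̃}(x,u) ≤ (2/(1−γ)) Σ_{x∈X} d_{π′}(x) Σ_{u∈U} |π′(u|x) − π̃(u|x)|. (Inequality part of Lemma 1.) -/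
open Finset

/-- **Inequality part of Lemma 1.**
For a finite MDP with rewards in `[0,1]`, policies `π'`, `π̃` with Bellman-consistent
Q-functions, and `d` the discounted state visitation distribution of `π'`:
`Σ_x d(x) Σ_u π'(u|x) A^{π̃}(x,u) ≤ (2/(1−γ)) Σ_x d(x) Σ_u |π'(u|x) − π̃(u|x)|`. -/
theorem performance_difference_inequality
    {X U : Type*} [Fintype X] [Fintype U] [Nonempty X] [Nonempty U]
    (γ : ℝ) (hγ0 : 0 ≤ γ) (hγ1 : γ < 1)
    (p : X → U → X → ℝ)
    (hp_nonneg : ∀ x u x', 0 ≤ p x u x')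
    (hp_sum : ∀ x u, ∑ x', p x u x' = 1)
    (r : X → U → ℝ)
    (hr0 : ∀ x u, 0 ≤ r x u) (hr1 : ∀ x u, r x u ≤ 1)
    (π' πt : X → U → ℝ)
    (hπ'_nonneg : ∀ x u, 0 ≤ π' x u) (hπ'_sum : ∀ x, ∑ u, π' x u = 1)
    (hπt_nonneg : ∀ x u, 0 ≤ πt x u) (hπt_sum : ∀ x, ∑ u, πt x u = 1)
    (Q' Qt : X → U → ℝ)
    (hQ' : ∀ x u, Q' x u = r x u + γ * ∑ x', p x u x' * ∑ u', π' x' u' * Q' x' u')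
    (hQt : ∀ x u, Qt x u = r x u + γ * ∑ x', p x u x' * ∑ u', πt x' u' * Qt x' u')
    (μ : X → ℝ) (hμ_nonneg : ∀ x, 0 ≤ μ x) (hμ_sum : ∑ x, μ x = 1)
    (d : X → ℝ)
    (hd_flow : ∀ x', d x' = (1 - γ) * μ x' + γ * ∑ x, ∑ u, d x * π' x u * p x u x')
    (hd_nonneg : ∀ x, 0 ≤ d x) (hd_sum : ∑ x, d x = 1) :
    ∑ x, d x * ∑ u, π' x u * (Qt x u - ∑ u', πt x u' * Qt x u') ≤
      (2 / (1 - γ)) * ∑ x, d x * ∑ u, |π' x u - πt x u| := by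
  have hγ' : (0:ℝ) < 1 - γ := by linarith
  -- Bound on Qt : 0 ≤ Qt ≤ 1/(1-γ)
  obtain ⟨a, -, ha⟩ := Finset.exists_max_image (univ : Finset (X × U))
    (fun xu => Qt xu.1 xu.2) univ_nonempty
  obtain ⟨b, -, hb⟩ := Finset.exists_min_image (univ : Finset (X × U))
    (fun xu => Qt xu.1 xu.2) univ_nonempty
  set M := Qt a.1 a.2 with hM
  set m := Qt b.1 b.2 with hm
  have haM : ∀ x u, Qt x u ≤ M := fun x u => ha (x, u) (mem_univ _)
  have hbm : ∀ x u, m ≤ Qt x u := fun x u => hb (x, u) (mem_univ _)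
  have hVle : ∀ x, ∑ u', πt x u' * Qt x u' ≤ M := by
    intro x
    calc ∑ u', πt x u' * Qt x u' ≤ ∑ u', πt x u' * M := by
          apply Finset.sum_le_sum
          intro u _
          exact mul_le_mul_of_nonneg_left (haM x u) (hπt_nonneg x u)
      _ = M := by rw [← Finset.sum_mul, hπt_sum x, one_mul]
  have hVge : ∀ x, m ≤ ∑ u', πt x u' * Qt x u' := by
    intro x
    calc m = ∑ u', πt x u' * m := by rw [← Finset.sum_mul, hπt_sum x, one_mul]
      _ ≤ ∑ u', πt x u' * Qt x u' := by
          apply Finset.sum_le_sum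
          intro u _
          exact mul_le_mul_of_nonneg_left (hbm x u) (hπt_nonneg x u)
  have hMle : M ≤ 1 / (1 - γ) := by
    have h1 : M ≤ 1 + γ * M := by
      have := hQt a.1 a.2
      have h2 : ∑ x', p a.1 a.2 x' * ∑ u', πt x' u' * Qt x' u' ≤ M := by
        calc ∑ x', p a.1 a.2 x' * ∑ u', πt x' u' * Qt x' u'
            ≤ ∑ x', p a.1 a.2 x' * M := by
              apply Finset.sum_le_sum
              intro x' _
              exact mul_le_mul_of_nonneg_left (hVle x') (hp_nonneg _ _ _)
          _ = M := by rw [← Finset.sum_mul, hp_sum, one_mul]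
      nlinarith [hr1 a.1 a.2, mul_le_mul_of_nonneg_left h2 hγ0]
    rw [le_div_iff₀ hγ']
    nlinarith
  have hmge : 0 ≤ m := by
    have h1 : γ * m ≤ m := by
      have := hQt b.1 b.2
      have h2 : m ≤ ∑ x', p b.1 b.2 x' * ∑ u', πt x' u' * Qt x' u' := by
        calc m = ∑ x', p b.1 b.2 x' * m := by rw [← Finset.sum_mul, hp_sum, one_mul]
          _ ≤ ∑ x', p b.1 b.2 x' * ∑ u', πt x' u' * Qt x' u' := by
              apply Finset.sum_le_sum
              intro x' _
              exact mul_le_mul_of_nonneg_left (hVge x') (hp_nonneg _ _ _)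
      nlinarith [hr0 b.1 b.2, mul_le_mul_of_nonneg_left h2 hγ0]
    nlinarith
  have hQabs : ∀ x u, |Qt x u| ≤ 1 / (1 - γ) := by
    intro x u
    rw [abs_le]
    constructor
    · have := hbm x u
      have : (0:ℝ) ≤ 1 / (1 - γ) := by positivity
      linarith [hbm x u]
    · exact le_trans (haM x u) hMle
  -- per-state bound
  have key : ∀ x, ∑ u, π' x u * (Qt x u - ∑ u', πt x u' * Qt x u') ≤
      (1 / (1 - γ)) * ∑ u, |π' x u - πt x u| := by
    intro x
    have heq : ∑ u, π' x u * (Qt x u - ∑ u', πt x u' * Qt x u') =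
        ∑ u, (π' x u - πt x u) * Qt x u := by
      simp only [mul_sub, sub_mul, Finset.sum_sub_distrib]
      rw [← Finset.sum_mul, hπ'_sum x, one_mul]
    rw [heq, Finset.mul_sum]
    apply Finset.sum_le_sum
    intro u _
    calc (π' x u - πt x u) * Qt x u ≤ |(π' x u - πt x u) * Qt x u| := le_abs_self _
      _ = |π' x u - πt x u| * |Qt x u| := abs_mul _ _
      _ ≤ |π' x u - πt x u| * (1 / (1 - γ)) :=
          mul_le_mul_of_nonneg_left (hQabs x u) (abs_nonneg _)
      _ = 1 / (1 - γ) * |π' x u - πt x u| := mul_comm _ _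
  calc ∑ x, d x * ∑ u, π' x u * (Qt x u - ∑ u', πt x u' * Qt x u')
      ≤ ∑ x, d x * ((1 / (1 - γ)) * ∑ u, |π' x u - πt x u|) := by
        apply Finset.sum_le_sum
        intro x _
        exact mul_le_mul_of_nonneg_left (key x) (hd_nonneg x)
    _ = (1 / (1 - γ)) * ∑ x, d x * ∑ u, |π' x u - πt x u| := by
        rw [Finset.mul_sum]; apply Finset.sum_congr rfl; intro x _; ring
    _ ≤ (2 / (1 - γ)) * ∑ x, d x * ∑ u, |π' x u - πt x u| := by
        apply mul_le_mul_of_nonneg_right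
        · gcongr <;> first | norm_num | exact hγ'.le
        · apply Finset.sum_nonneg
          intro x _
          exact mul_nonneg (hd_nonneg x) (Finset.sum_nonneg fun u _ => abs_nonneg _)
end

section
/- Let X be a nonempty finite state space, U a nonempty finite action space, γ ∈ [0,1), and π a policy. Let r, r̂ : X × U → ℝ be reward functions with values in [0,1], and let p, p̂ be two transition kernels on X × U. Let V^π be the value function of π for the MDP with rewards r and kernel p (with Q^π satisfying the corresponding Bellman equation), and V̂^π the value function of π for rewards r̂ and kernel p̂. Then max_{x∈X} |V^π(x) − V̂^π(x)| ≤ (1/(1−γ)) ( max_{(x,u)} |r(x,u) − r̂(x,u)| + (γ/(1−γ)) max_{(x,u)} D_TV(p(·|x,u), p̂(·|x,u)) ). (State value estimation error, Lemma 2.) -/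
open Finset

private lemma wavg_le {ι : Type*} [Fintype ι] (w f : ι → ℝ) (c : ℝ)
    (hw : ∀ i, 0 ≤ w i) (hsum : ∑ i, w i = 1) (hf : ∀ i, f i ≤ c) :
    ∑ i, w i * f i ≤ c := by
  calc ∑ i, w i * f i ≤ ∑ i, w i * c :=
        Finset.sum_le_sum fun i _ => mul_le_mul_of_nonneg_left (hf i) (hw i)
    _ = c := by rw [← Finset.sum_mul, hsum, one_mul]

private lemma wavg_ge {ι : Type*} [Fintype ι] (w f : ι → ℝ) (c : ℝ)
    (hw : ∀ i, 0 ≤ w i) (hsum : ∑ i, w i = 1) (hf : ∀ i, c ≤ f i) :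
    c ≤ ∑ i, w i * f i := by
  calc c = ∑ i, w i * c := by rw [← Finset.sum_mul, hsum, one_mul]
    _ ≤ ∑ i, w i * f i :=
        Finset.sum_le_sum fun i _ => mul_le_mul_of_nonneg_left (hf i) (hw i)

private lemma wabs_le {ι : Type*} [Fintype ι] (w f : ι → ℝ) (c : ℝ)
    (hw : ∀ i, 0 ≤ w i) (hsum : ∑ i, w i = 1) (hf : ∀ i, |f i| ≤ c) :
    |∑ i, w i * f i| ≤ c := by
  calc |∑ i, w i * f i| ≤ ∑ i, |w i * f i| := Finset.abs_sum_le_sum_abs _ _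
    _ = ∑ i, w i * |f i| := by
        refine Finset.sum_congr rfl fun i _ => ?_
        rw [abs_mul, abs_of_nonneg (hw i)]
    _ ≤ c := wavg_le w (fun i => |f i|) c hw hsum hf

/-- **State value estimation error (Lemma 2).**
For a fixed policy `π`, two reward functions `r, r̂` with values in `[0,1]` and two
transition kernels `p, p̂`, with `Q`, `Q̂` the corresponding Bellman-consistent
Q-functions and `V`, `V̂` the value functions:
`max_x |V(x) − V̂(x)| ≤ (1/(1−γ)) (max_{(x,u)} |r(x,u) − r̂(x,u)|
  + (γ/(1−γ)) max_{(x,u)} D_TV(p(·|x,u), p̂(·|x,u)))`,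
where `D_TV(P,Q) = (1/2) Σ_ω |P ω − Q ω|`. -/
theorem state_value_estimation_error
    {X U : Type*} [Fintype X] [Fintype U] [Nonempty X] [Nonempty U]
    (γ : ℝ) (hγ0 : 0 ≤ γ) (hγ1 : γ < 1)
    (π : X → U → ℝ)
    (hπ_nonneg : ∀ x u, 0 ≤ π x u) (hπ_sum : ∀ x, ∑ u, π x u = 1)
    (r rh : X → U → ℝ)
    (hr0 : ∀ x u, 0 ≤ r x u) (hr1 : ∀ x u, r x u ≤ 1)
    (hrh0 : ∀ x u, 0 ≤ rh x u) (hrh1 : ∀ x u, rh x u ≤ 1)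
    (p ph : X → U → X → ℝ)
    (hp_nonneg : ∀ x u x', 0 ≤ p x u x') (hp_sum : ∀ x u, ∑ x', p x u x' = 1)
    (hph_nonneg : ∀ x u x', 0 ≤ ph x u x') (hph_sum : ∀ x u, ∑ x', ph x u x' = 1)
    (Q Qh : X → U → ℝ)
    (hQ : ∀ x u, Q x u = r x u + γ * ∑ x', p x u x' * ∑ u', π x' u' * Q x' u')
    (hQh : ∀ x u, Qh x u = rh x u + γ * ∑ x', ph x u x' * ∑ u', π x' u' * Qh x' u') :
    (⨆ x : X, |(∑ u, π x u * Q x u) - (∑ u, π x u * Qh x u)|) ≤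
      (1 / (1 - γ)) *
        ((⨆ q : X × U, |r q.1 q.2 - rh q.1 q.2|) +
          (γ / (1 - γ)) *
            ⨆ q : X × U, (1 / 2) * ∑ x', |p q.1 q.2 x' - ph q.1 q.2 x'|) := by
  have hγ' : (0:ℝ) < 1 - γ := by linarith
  set Vh : X → ℝ := fun x => ∑ u, π x u * Qh x u with hVh
  set V : X → ℝ := fun x => ∑ u, π x u * Q x u with hV
  -- Step A: 0 ≤ Qh ≤ 1/(1-γ)
  have hQh_nonneg : ∀ x u, 0 ≤ Qh x u := by
    set m := ⨅ q : X × U, Qh q.1 q.2 with hm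
    have hge : ∀ x u, m ≤ Qh x u := fun x u =>
      ciInf_le (Set.Finite.bddBelow (Set.finite_range _)) (x, u)
    have hstep : ∀ x u, γ * m ≤ Qh x u := by
      intro x u
      rw [hQh]
      have h1 : ∀ x', m ≤ ∑ u', π x' u' * Qh x' u' := fun x' =>
        wavg_ge _ _ _ (hπ_nonneg x') (hπ_sum x') (hge x')
      have h2 : m ≤ ∑ x', ph x u x' * ∑ u', π x' u' * Qh x' u' :=
        wavg_ge _ _ _ (hph_nonneg x u) (hph_sum x u) h1
      nlinarith [hrh0 x u]
    have hmm : γ * m ≤ m := le_ciInf fun q => hstep q.1 q.2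
    have hm0 : 0 ≤ m := by nlinarith
    exact fun x u => le_trans hm0 (hge x u)
  have hQh_le : ∀ x u, Qh x u ≤ 1 / (1 - γ) := by
    set M' := ⨆ q : X × U, Qh q.1 q.2 with hM'
    have hle : ∀ x u, Qh x u ≤ M' := fun x u =>
      le_ciSup (f := fun q : X × U => Qh q.1 q.2)
        (Set.Finite.bddAbove (Set.finite_range _)) (x, u)
    have hstep : ∀ x u, Qh x u ≤ 1 + γ * M' := by
      intro x u
      rw [hQh]
      have h1 : ∀ x', ∑ u', π x' u' * Qh x' u' ≤ M' := fun x' =>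
        wavg_le _ _ _ (hπ_nonneg x') (hπ_sum x') (hle x')
      have h2 : ∑ x', ph x u x' * ∑ u', π x' u' * Qh x' u' ≤ M' :=
        wavg_le _ _ _ (hph_nonneg x u) (hph_sum x u) h1
      nlinarith [hrh1 x u]
    have hMM : M' ≤ 1 + γ * M' := ciSup_le fun q => hstep q.1 q.2
    have hMb : M' ≤ 1 / (1 - γ) := by
      rw [le_div_iff₀ hγ']; nlinarith
    exact fun x u => (hle x u).trans hMb
  have hVh_nonneg : ∀ x, 0 ≤ Vh x := fun x =>
    wavg_ge _ _ _ (hπ_nonneg x) (hπ_sum x) (hQh_nonneg x)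
  have hVh_le : ∀ x, Vh x ≤ 1 / (1 - γ) := fun x =>
    wavg_le _ _ _ (hπ_nonneg x) (hπ_sum x) (hQh_le x)
  -- Step B
  set Δr := ⨆ q : X × U, |r q.1 q.2 - rh q.1 q.2| with hΔr
  set D := ⨆ q : X × U, (1 / 2) * ∑ x', |p q.1 q.2 x' - ph q.1 q.2 x'| with hD
  set M := ⨆ q : X × U, |Q q.1 q.2 - Qh q.1 q.2| with hM
  have hMle : ∀ x u, |Q x u - Qh x u| ≤ M := fun x u =>
    le_ciSup (f := fun q : X × U => |Q q.1 q.2 - Qh q.1 q.2|)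
      (Set.Finite.bddAbove (Set.finite_range _)) (x, u)
  have hVdiff : ∀ x, |V x - Vh x| ≤ M := by
    intro x
    have : V x - Vh x = ∑ u, π x u * (Q x u - Qh x u) := by
      simp [hV, hVh, mul_sub, Finset.sum_sub_distrib]
    rw [this]
    exact wabs_le _ _ _ (hπ_nonneg x) (hπ_sum x) (hMle x)
  have hΔrle : ∀ x u, |r x u - rh x u| ≤ Δr := fun x u =>
    le_ciSup (f := fun q : X × U => |r q.1 q.2 - rh q.1 q.2|)
      (Set.Finite.bddAbove (Set.finite_range _)) (x, u)
  have hDle : ∀ x u, (1 / 2) * ∑ x', |p x u x' - ph x u x'| ≤ D := fun x u =>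
    le_ciSup (f := fun q : X × U => (1 / 2) * ∑ x', |p q.1 q.2 x' - ph q.1 q.2 x'|)
      (Set.Finite.bddAbove (Set.finite_range _)) (x, u)
  -- key pointwise bound
  have hkey : ∀ x u, |Q x u - Qh x u| ≤ Δr + γ * M + γ * (D / (1 - γ)) := by
    intro x u
    have hdecomp : Q x u - Qh x u =
        (r x u - rh x u) + γ * (∑ x', p x u x' * (V x' - Vh x'))
          + γ * (∑ x', (p x u x' - ph x u x') * Vh x') := by
      have e1 : (∑ x', p x u x' * (V x' - Vh x'))
          = (∑ x', p x u x' * V x') - ∑ x', p x u x' * Vh x' := by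
        simp [mul_sub, Finset.sum_sub_distrib]
      have e2 : (∑ x', (p x u x' - ph x u x') * Vh x')
          = (∑ x', p x u x' * Vh x') - ∑ x', ph x u x' * Vh x' := by
        simp [sub_mul, Finset.sum_sub_distrib]
      rw [hQ, hQh, e1, e2]
      simp only [hV, hVh]
      ring
    have hb1 : |∑ x', p x u x' * (V x' - Vh x')| ≤ M :=
      wabs_le _ _ _ (hp_nonneg x u) (hp_sum x u) hVdiff
    have hb2 : |∑ x', (p x u x' - ph x u x') * Vh x'| ≤ D / (1 - γ) := by
      set c : ℝ := 1 / (2 * (1 - γ)) with hc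
      have hshift : ∑ x', (p x u x' - ph x u x') * Vh x'
          = ∑ x', (p x u x' - ph x u x') * (Vh x' - c) := by
        simp [mul_sub, Finset.sum_sub_distrib, ← Finset.sum_mul,
          hp_sum x u, hph_sum x u]
      rw [hshift]
      have hbd : ∀ x', |(p x u x' - ph x u x') * (Vh x' - c)|
          ≤ |p x u x' - ph x u x'| * c := by
        intro x'
        rw [abs_mul]
        refine mul_le_mul_of_nonneg_left ?_ (abs_nonneg _)
        rw [abs_le]
        constructor
        · have := hVh_nonneg x'
          have hc0 : 0 ≤ c := by positivity
          linarith
        · have h1 := hVh_le x'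
          have h2 : 2 * c = 1 / (1 - γ) := by
            rw [hc]; field_simp
          linarith
      calc |∑ x', (p x u x' - ph x u x') * (Vh x' - c)|
          ≤ ∑ x', |(p x u x' - ph x u x') * (Vh x' - c)| :=
            Finset.abs_sum_le_sum_abs _ _
        _ ≤ ∑ x', |p x u x' - ph x u x'| * c := Finset.sum_le_sum fun i _ => hbd i
        _ = (∑ x', |p x u x' - ph x u x'|) * c := by rw [Finset.sum_mul]
        _ = ((1/2) * ∑ x', |p x u x' - ph x u x'|) * (1/(1-γ)) := by
            have hc2 : c = (1/2) * (1/(1-γ)) := by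
              rw [hc, one_div, mul_inv]; ring
            rw [hc2]; ring
        _ ≤ D * (1/(1-γ)) := by
            refine mul_le_mul_of_nonneg_right (hDle x u) ?_
            positivity
        _ = D / (1 - γ) := by ring
    calc |Q x u - Qh x u|
        ≤ |r x u - rh x u| + |γ * (∑ x', p x u x' * (V x' - Vh x'))|
            + |γ * (∑ x', (p x u x' - ph x u x') * Vh x')| := by
          rw [hdecomp]; exact (abs_add_le _ _).trans (by gcongr; exact abs_add_le _ _)
      _ ≤ Δr + γ * M + γ * (D / (1 - γ)) := by
          rw [abs_mul, abs_mul, abs_of_nonneg hγ0]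
          exact add_le_add (add_le_add (hΔrle x u)
            (mul_le_mul_of_nonneg_left hb1 hγ0)) (mul_le_mul_of_nonneg_left hb2 hγ0)
  have hMbound : M ≤ Δr + γ * M + γ * (D / (1 - γ)) :=
    ciSup_le fun q => hkey q.1 q.2
  have hMfinal : M ≤ (1 / (1 - γ)) * (Δr + (γ / (1 - γ)) * D) := by
    have heq : γ * (D / (1 - γ)) = (γ / (1 - γ)) * D := by ring
    have h2 : M * (1 - γ) ≤ Δr + (γ / (1 - γ)) * D := by
      rw [← heq]; nlinarith [hMbound]
    calc M ≤ (Δr + (γ / (1 - γ)) * D) / (1 - γ) := (le_div_iff₀ hγ').mpr h2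
      _ = (1 / (1 - γ)) * (Δr + (γ / (1 - γ)) * D) := by ring
  calc (⨆ x : X, |V x - Vh x|) ≤ M := ciSup_le hVdiff
    _ ≤ (1 / (1 - γ)) * (Δr + (γ / (1 - γ)) * D) := hMfinal
end

section
/- Let X be a nonempty finite state space, U a nonempty finite action space, γ ∈ [0,1), and π a policy. Let r : X × U → ℝ be a reward function with values in [0,1], and let p^S and p^T be two transition kernels on X × U such that p^T(x′|x,u) > 0 for all x, u, x′. Let V_{p^S}^π and V_{p^T}^π be the value functions of π under kernels p^S and p^T respectively (with the same reward r, and with the corresponding Q-functions satisfying their Bellman equations). Then max_{x∈X} |V_{p^S}^π(x) − V_{p^T}^π(x)| ≤ (γ/(1−γ)²) · max_{(x,u)} √( (1/2) D_KL(p^S(·|x,u) ‖ p^T(·|x,u)) ). (Corollary 2.) -/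
/-!
One Bellman step gives `Q_S - Q_T = γ (p_S (V_S - V_T) + (p_S - p_T) V_T)`. The first term is at
most `γ ‖V_S - V_T‖_∞`. Since `V_T` takes values in `[0, 1/(1-γ)]` and `p_S - p_T` has total mass
zero, the second is at most `γ/(1-γ)` times the total variation distance `‖p_S - p_T‖₁ / 2`, which
Pinsker's inequality bounds by `√(KL/2)`. Solving `D ≤ γ D + γ K/(1-γ)` for `D = ‖V_S - V_T‖_∞`
gives the claim.

Pinsker's inequality follows from the pointwise bound `3 (t-1)² / (2 (t+2)) ≤ t log t - t + 1` and
Cauchy–Schwarz with weights `p + 2 q`, whose total mass `3` cancels the `3/2`.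
-/

open Finset InformationTheory

theorem hasDerivAt_klFun_sub_quadratic_div {t : ℝ} (ht : 0 < t) :
    HasDerivAt (fun t ↦ klFun t - 3 * (t - 1) ^ 2 / (2 * (t + 2)))
      (Real.log t - 3 * ((t - 1) * (t + 5)) / (2 * (t + 2) ^ 2)) t := by
  have h2 : 2 * (t + 2) ≠ 0 := by positivity
  refine (hasDerivAt_klFun ht.ne').sub <|
    ((((hasDerivAt_id t).sub_const 1).pow 2).const_mul 3 |>.div
      (((hasDerivAt_id t).add_const 2).const_mul 2) h2).congr_deriv ?_
  simp only [id_eq, Pi.pow_apply]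
  field_simp
  ring

theorem hasDerivAt_log_sub_rational {t : ℝ} (ht : 0 < t) :
    HasDerivAt (fun t ↦ Real.log t - 3 * ((t - 1) * (t + 5)) / (2 * (t + 2) ^ 2))
      (1 / t - 27 / (t + 2) ^ 3) t := by
  have h2 : 2 * (t + 2) ^ 2 ≠ 0 := by positivity
  refine ((Real.hasDerivAt_log ht.ne').sub <|
    ((((hasDerivAt_id t).sub_const 1).mul ((hasDerivAt_id t).add_const 5)).const_mul 3
      |>.div ((((hasDerivAt_id t).add_const 2).pow 2).const_mul 2) h2).congr_deriv ?_)
    |>.congr_deriv (by rw [one_div])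
  simp only [id_eq, Pi.pow_apply, Pi.mul_apply]
  field_simp
  ring

theorem quadratic_div_le_klFun {t : ℝ} (ht : 0 ≤ t) :
    3 * (t - 1) ^ 2 / (2 * (t + 2)) ≤ klFun t := by
  set g : ℝ → ℝ := fun t ↦ klFun t - 3 * (t - 1) ^ 2 / (2 * (t + 2))
  have hconv : ConvexOn ℝ (Set.Ici 0) g := by
    have hcont : ContinuousOn g (Set.Ici 0) :=
      continuous_klFun.continuousOn.sub <| ContinuousOn.div (by fun_prop) (by fun_prop)
        fun t ht ↦ by simp only [Set.mem_Ici] at ht; positivity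
    refine convexOn_of_hasDerivWithinAt2_nonneg (convex_Ici 0) hcont
      (f' := fun t ↦ Real.log t - 3 * ((t - 1) * (t + 5)) / (2 * (t + 2) ^ 2))
      (f'' := fun t ↦ 1 / t - 27 / (t + 2) ^ 3) ?_ ?_ ?_ <;>
      simp only [interior_Ici, Set.mem_Ioi]
    · exact fun t ht ↦ (hasDerivAt_klFun_sub_quadratic_div ht).hasDerivWithinAt
    · exact fun t ht ↦ (hasDerivAt_log_sub_rational ht).hasDerivWithinAt
    · intro t ht
      rw [sub_nonneg, div_le_div_iff₀ (by positivity) ht]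
      nlinarith [mul_nonneg (sq_nonneg (t - 1)) (by linarith : (0 : ℝ) ≤ t + 8)]
  have hmin : IsMinOn g (Set.Ici 0) 1 := by
    refine hconv.isMinOn_of_rightDeriv_eq_zero (by simp) ?_
    rw [(hasDerivAt_klFun_sub_quadratic_div one_pos).hasDerivWithinAt.derivWithin
      (uniqueDiffWithinAt_Ioi 1)]
    norm_num
  have := hmin (Set.mem_Ici.2 ht)
  norm_num [g, klFun_one] at this
  linarith

theorem quadratic_div_le_mul_log_sub_add {a b : ℝ} (ha : 0 ≤ a) (hb : 0 < b) :
    3 * (a - b) ^ 2 / (2 * (a + 2 * b)) ≤ a * Real.log (a / b) - a + b := by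
  have hab : a + 2 * b ≠ 0 := by positivity
  calc 3 * (a - b) ^ 2 / (2 * (a + 2 * b)) = b * (3 * (a / b - 1) ^ 2 / (2 * (a / b + 2))) := by
        field_simp
    _ ≤ b * klFun (a / b) := by gcongr; exact quadratic_div_le_klFun (by positivity)
    _ = a * Real.log (a / b) - a + b := by
        rw [klFun_apply]
        field_simp
        ring

theorem sq_sum_abs_sub_le_two_mul_sum_mul_log {ι : Type*} [Fintype ι] {p q : ι → ℝ}
    (hp : ∀ i, 0 ≤ p i) (hq : ∀ i, 0 < q i) (hp1 : ∑ i, p i = 1) (hq1 : ∑ i, q i = 1) :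
    (∑ i, |p i - q i|) ^ 2 ≤ 2 * ∑ i, p i * Real.log (p i / q i) := by
  have hw : ∀ i ∈ univ, 0 < p i + 2 * q i := fun i _ ↦ by linarith [hp i, hq i]
  have hw3 : ∑ i, (p i + 2 * q i) = 3 := by
    rw [sum_add_distrib, ← mul_sum, hp1, hq1]; norm_num
  calc (∑ i, |p i - q i|) ^ 2 = 3 * ((∑ i, |p i - q i|) ^ 2 / ∑ i, (p i + 2 * q i)) := by
        rw [hw3]; ring
    _ ≤ 3 * ∑ i, |p i - q i| ^ 2 / (p i + 2 * q i) := by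
        gcongr; exact sq_sum_div_le_sum_sq_div _ _ hw
    _ = 2 * ∑ i, 3 * (p i - q i) ^ 2 / (2 * (p i + 2 * q i)) := by
        simp only [mul_sum, sq_abs]
        refine sum_congr rfl fun i hi ↦ ?_
        have := (hw i hi).ne'
        field_simp
    _ ≤ 2 * ∑ i, (p i * Real.log (p i / q i) - p i + q i) := by
        gcongr with i; exact quadratic_div_le_mul_log_sub_add (hp i) (hq i)
    _ = 2 * ∑ i, p i * Real.log (p i / q i) := by
        rw [sum_add_distrib, sum_sub_distrib, hp1, hq1]; ring

theorem sum_abs_sub_div_two_le_sqrt {ι : Type*} [Fintype ι] {p q : ι → ℝ}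
    (hp : ∀ i, 0 ≤ p i) (hq : ∀ i, 0 < q i) (hp1 : ∑ i, p i = 1) (hq1 : ∑ i, q i = 1) :
    (∑ i, |p i - q i|) / 2 ≤ √((1 / 2) * ∑ i, p i * Real.log (p i / q i)) := by
  apply Real.le_sqrt_of_sq_le
  have := sq_sum_abs_sub_le_two_mul_sum_mul_log hp hq hp1 hq1
  linarith [div_pow (∑ i, |p i - q i|) 2 2]

section WeightedAverage

variable {ι : Type*} [Fintype ι] {w f : ι → ℝ} {c : ℝ}

theorem sum_mul_le_of_le (hw : ∀ i, 0 ≤ w i) (hw1 : ∑ i, w i = 1) (hf : ∀ i, f i ≤ c) :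
    ∑ i, w i * f i ≤ c :=
  calc ∑ i, w i * f i ≤ ∑ i, w i * c := by gcongr with i; exacts [hw i, hf i]
    _ = c := by rw [← sum_mul, hw1, one_mul]

theorem le_sum_mul_of_le (hw : ∀ i, 0 ≤ w i) (hw1 : ∑ i, w i = 1) (hf : ∀ i, c ≤ f i) :
    c ≤ ∑ i, w i * f i :=
  calc c = ∑ i, w i * c := by rw [← sum_mul, hw1, one_mul]
    _ ≤ ∑ i, w i * f i := by gcongr with i; exacts [hw i, hf i]

theorem abs_sum_mul_le_of_abs_le (hw : ∀ i, 0 ≤ w i) (hw1 : ∑ i, w i = 1)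
    (hf : ∀ i, |f i| ≤ c) : |∑ i, w i * f i| ≤ c :=
  abs_le.2 ⟨le_sum_mul_of_le hw hw1 fun i ↦ (abs_le.1 (hf i)).1,
    sum_mul_le_of_le hw hw1 fun i ↦ (abs_le.1 (hf i)).2⟩

end WeightedAverage

theorem abs_sum_sub_mul_le {ι : Type*} [Fintype ι] {p q f : ι → ℝ} {a b : ℝ}
    (hpq : ∑ i, p i = ∑ i, q i) (hf : ∀ i, f i ∈ Set.Icc a b) :
    |∑ i, (p i - q i) * f i| ≤ (b - a) / 2 * ∑ i, |p i - q i| := by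
  have hcentre : ∑ i, (p i - q i) * f i = ∑ i, (p i - q i) * (f i - (a + b) / 2) := by
    simp only [mul_sub, sum_sub_distrib, ← sum_mul, hpq, sub_self, zero_mul, sub_zero]
  rw [hcentre, mul_sum]
  refine (abs_sum_le_sum_abs _ _).trans (sum_le_sum fun i _ ↦ ?_)
  rw [abs_mul, mul_comm]
  gcongr
  exact abs_le.2 ⟨by linarith [(hf i).1], by linarith [(hf i).2]⟩

section MDP

variable {X U : Type*} [Fintype U]

def stateValue (π Q : X → U → ℝ) (x : X) : ℝ := ∑ u, π x u * Q x u

theorem stateValue_neg {π Q : X → U → ℝ} : stateValue π (-Q) = -stateValue π Q := by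
  ext x; simp [stateValue]

variable [Fintype X]

def IsActionValue (γ : ℝ) (p : X → U → X → ℝ) (π r Q : X → U → ℝ) : Prop :=
  ∀ x u, Q x u = r x u + γ * ∑ x', p x u x' * stateValue π Q x'

variable {γ : ℝ} {p : X → U → X → ℝ} {π r Q : X → U → ℝ}

theorem IsActionValue.neg (hQ : IsActionValue γ p π r Q) : IsActionValue γ p π (-r) (-Q) := by
  intro x u
  simp only [Pi.neg_apply, hQ x u, stateValue_neg, mul_neg, sum_neg_distrib]
  ring

theorem IsActionValue.le_div (hγ0 : 0 ≤ γ) (hγ1 : γ < 1)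
    (hπ0 : ∀ x u, 0 ≤ π x u) (hπ1 : ∀ x, ∑ u, π x u = 1)
    (hp0 : ∀ x u x', 0 ≤ p x u x') (hp1 : ∀ x u, ∑ x', p x u x' = 1)
    {b : ℝ} (hr : ∀ x u, r x u ≤ b) (hQ : IsActionValue γ p π r Q) (x : X) (u : U) :
    Q x u ≤ b / (1 - γ) := by
  have : Nonempty (X × U) := ⟨(x, u)⟩
  obtain ⟨z, hz⟩ := Finite.exists_max fun z : X × U ↦ Q z.1 z.2
  have hnext : ∑ x', p z.1 z.2 x' * stateValue π Q x' ≤ Q z.1 z.2 :=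
    sum_mul_le_of_le (hp0 _ _) (hp1 _ _) fun x' ↦
      sum_mul_le_of_le (hπ0 x') (hπ1 x') fun u' ↦ hz (x', u')
  have hmax : Q z.1 z.2 ≤ b / (1 - γ) := by
    rw [le_div_iff₀ (by linarith)]
    nlinarith [hQ z.1 z.2, hr z.1 z.2]
  exact (hz (x, u)).trans hmax

theorem IsActionValue.stateValue_mem_Icc (hγ0 : 0 ≤ γ) (hγ1 : γ < 1)
    (hπ0 : ∀ x u, 0 ≤ π x u) (hπ1 : ∀ x, ∑ u, π x u = 1)
    (hp0 : ∀ x u x', 0 ≤ p x u x') (hp1 : ∀ x u, ∑ x', p x u x' = 1)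
    {a b : ℝ} (hra : ∀ x u, a ≤ r x u) (hrb : ∀ x u, r x u ≤ b) (hQ : IsActionValue γ p π r Q)
    (x : X) : stateValue π Q x ∈ Set.Icc (a / (1 - γ)) (b / (1 - γ)) := by
  have hlow (u : U) : a / (1 - γ) ≤ Q x u := by
    have := hQ.neg.le_div hγ0 hγ1 hπ0 hπ1 hp0 hp1 (b := -a) (fun x u ↦ neg_le_neg (hra x u)) x u
    rw [Pi.neg_apply, neg_div] at this
    exact neg_le_neg_iff.1 this
  exact ⟨le_sum_mul_of_le (hπ0 x) (hπ1 x) hlow,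
    sum_mul_le_of_le (hπ0 x) (hπ1 x) (hQ.le_div hγ0 hγ1 hπ0 hπ1 hp0 hp1 hrb x)⟩

theorem abs_stateValue_sub_le (hγ0 : 0 ≤ γ) (hγ1 : γ < 1)
    (hπ0 : ∀ x u, 0 ≤ π x u) (hπ1 : ∀ x, ∑ u, π x u = 1)
    {pS pT : X → U → X → ℝ} (hpS0 : ∀ x u x', 0 ≤ pS x u x') (hpS1 : ∀ x u, ∑ x', pS x u x' = 1)
    {QS QT : X → U → ℝ} (hQS : IsActionValue γ pS π r QS) (hQT : IsActionValue γ pT π r QT)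
    {ε : ℝ} (hε : ∀ x u, |∑ x', (pS x u x' - pT x u x') * stateValue π QT x'| ≤ ε) (x : X) :
    |stateValue π QS x - stateValue π QT x| ≤ γ * ε / (1 - γ) := by
  have : Nonempty X := ⟨x⟩
  obtain ⟨x₀, hx₀⟩ := Finite.exists_max fun x ↦ |stateValue π QS x - stateValue π QT x|
  set D := |stateValue π QS x₀ - stateValue π QT x₀|
  have hQ (x : X) (u : U) : |QS x u - QT x u| ≤ γ * (D + ε) := by
    have hsplit : QS x u - QT x u = γ * (∑ x', pS x u x' *
          (stateValue π QS x' - stateValue π QT x') +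
        ∑ x', (pS x u x' - pT x u x') * stateValue π QT x') := by
      rw [hQS x u, hQT x u]
      simp only [mul_sub, sub_mul, sum_sub_distrib]
      ring
    rw [hsplit, abs_mul, abs_of_nonneg hγ0]
    gcongr
    exact (abs_add_le _ _).trans
      (add_le_add (abs_sum_mul_le_of_abs_le (hpS0 x u) (hpS1 x u) hx₀) (hε x u))
  have hV (x : X) : |stateValue π QS x - stateValue π QT x| ≤ γ * (D + ε) := by
    simp only [stateValue, ← sum_sub_distrib, ← mul_sub]
    exact abs_sum_mul_le_of_abs_le (hπ0 x) (hπ1 x) (hQ x)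
  have hD : D ≤ γ * ε / (1 - γ) := by
    rw [le_div_iff₀ (by linarith)]
    nlinarith [hV x₀]
  exact (hx₀ x).trans hD

end MDP

theorem value_gap_kl_bound_general
    {X U : Type*} [Fintype X] [Fintype U]
    (γ : ℝ) (hγ0 : 0 ≤ γ) (hγ1 : γ < 1)
    (π : X → U → ℝ)
    (hπ_nonneg : ∀ x u, 0 ≤ π x u) (hπ_sum : ∀ x, ∑ u, π x u = 1)
    (r : X → U → ℝ)
    (hr0 : ∀ x u, 0 ≤ r x u) (hr1 : ∀ x u, r x u ≤ 1)
    (pS pT : X → U → X → ℝ)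
    (hpS_nonneg : ∀ x u x', 0 ≤ pS x u x') (hpS_sum : ∀ x u, ∑ x', pS x u x' = 1)
    (hpT_pos : ∀ x u x', 0 < pT x u x') (hpT_sum : ∀ x u, ∑ x', pT x u x' = 1)
    (QS QT : X → U → ℝ)
    (hQS : ∀ x u, QS x u = r x u + γ * ∑ x', pS x u x' * ∑ u', π x' u' * QS x' u')
    (hQT : ∀ x u, QT x u = r x u + γ * ∑ x', pT x u x' * ∑ u', π x' u' * QT x' u') :
    (⨆ x : X, |(∑ u, π x u * QS x u) - (∑ u, π x u * QT x u)|) ≤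
      (γ / (1 - γ) ^ 2) *
        ⨆ q : X × U,
          Real.sqrt
            ((1 / 2) *
              ∑ x', pS q.1 q.2 x' * Real.log (pS q.1 q.2 x' / pT q.1 q.2 x')) := by
  set K := ⨆ q : X × U,
    √((1 / 2) * ∑ x', pS q.1 q.2 x' * Real.log (pS q.1 q.2 x' / pT q.1 q.2 x')) with hK
  have hK0 : 0 ≤ K := Real.iSup_nonneg fun _ ↦ Real.sqrt_nonneg _
  have hKq : ∀ q : X × U,
      √((1 / 2) * ∑ x', pS q.1 q.2 x' * Real.log (pS q.1 q.2 x' / pT q.1 q.2 x')) ≤ K := by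
    rw [hK]; exact le_ciSup (Finite.bddAbove_range _)
  have hVT := IsActionValue.stateValue_mem_Icc hγ0 hγ1 hπ_nonneg hπ_sum
    (fun x u x' ↦ (hpT_pos x u x').le) hpT_sum hr0 hr1 hQT
  have hdrift (x : X) (u : U) :
      |∑ x', (pS x u x' - pT x u x') * stateValue π QT x'| ≤ K / (1 - γ) :=
    calc _ ≤ (1 / (1 - γ) - 0 / (1 - γ)) / 2 * ∑ x', |pS x u x' - pT x u x'| :=
          abs_sum_sub_mul_le (by rw [hpS_sum, hpT_sum]) hVT
      _ = (∑ x', |pS x u x' - pT x u x'|) / 2 / (1 - γ) := by ring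
      _ ≤ K / (1 - γ) := by
          gcongr
          exact (sum_abs_sub_div_two_le_sqrt (hpS_nonneg x u) (hpT_pos x u) (hpS_sum x u)
            (hpT_sum x u)).trans (hKq (x, u))
  refine Real.iSup_le (fun x ↦ ?_) (mul_nonneg (by positivity) hK0)
  calc _ ≤ γ * (K / (1 - γ)) / (1 - γ) :=
        abs_stateValue_sub_le hγ0 hγ1 hπ_nonneg hπ_sum hpS_nonneg hpS_sum hQS hQT hdrift x
    _ = γ / (1 - γ) ^ 2 * K := by field_simp

/-- **Corollary 2.**
For a fixed policy `π`, a reward `r` with values in `[0,1]`, and two transition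
kernels `pS`, `pT` with `pT` everywhere positive, the corresponding value functions
satisfy
`max_x |V_{pS}^π(x) − V_{pT}^π(x)|
  ≤ (γ/(1−γ)²) max_{(x,u)} √((1/2) D_KL(pS(·|x,u) ‖ pT(·|x,u)))`,
where `D_KL(P‖Q) = Σ_ω P ω log (P ω / Q ω)`. -/
theorem value_gap_kl_bound
    {X U : Type*} [Fintype X] [Fintype U] [Nonempty X] [Nonempty U]
    (γ : ℝ) (hγ0 : 0 ≤ γ) (hγ1 : γ < 1)
    (π : X → U → ℝ)
    (hπ_nonneg : ∀ x u, 0 ≤ π x u) (hπ_sum : ∀ x, ∑ u, π x u = 1)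
    (r : X → U → ℝ)
    (hr0 : ∀ x u, 0 ≤ r x u) (hr1 : ∀ x u, r x u ≤ 1)
    (pS pT : X → U → X → ℝ)
    (hpS_nonneg : ∀ x u x', 0 ≤ pS x u x') (hpS_sum : ∀ x u, ∑ x', pS x u x' = 1)
    (hpT_pos : ∀ x u x', 0 < pT x u x') (hpT_sum : ∀ x u, ∑ x', pT x u x' = 1)
    (QS QT : X → U → ℝ)
    (hQS : ∀ x u, QS x u = r x u + γ * ∑ x', pS x u x' * ∑ u', π x' u' * QS x' u')
    (hQT : ∀ x u, QT x u = r x u + γ * ∑ x', pT x u x' * ∑ u', π x' u' * QT x' u') :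
    (⨆ x : X, |(∑ u, π x u * QS x u) - (∑ u, π x u * QT x u)|) ≤
      (γ / (1 - γ) ^ 2) *
        ⨆ q : X × U,
          Real.sqrt
            ((1 / 2) *
              ∑ x', pS q.1 q.2 x' * Real.log (pS q.1 q.2 x' / pT q.1 q.2 x')) :=
  value_gap_kl_bound_general γ hγ0 hγ1 π hπ_nonneg hπ_sum r hr0 hr1 pS pT hpS_nonneg hpS_sum hpT_pos
    hpT_sum QS QT hQS hQT
end

section
/- Let (X,U,p,r,γ) be a finite MDP with rewards satisfying 0 ≤ r(x,u) ≤ 1 for all (x,u). Let π_b (behavior policy), π_i, and π_{i+1} be policies whose state–action value functions satisfy their Bellman equations, with value functions V^{π_i}, V^{π_{i+1}} and advantage function A^{π_i}. Let μ be a probability mass function on X and d_{π_b} the discounted state visitation distribution of π_b with initial distribution μ. Then Σ_{x∈X} d_{π_b}(x) Σ_{u∈U} π_b(u|x) A^{π_i}(x,u) − (2/(1−γ)) Σ_{x∈X} d_{π_b}(x) D_TV(π_b(·|x), π_{i+1}(·|x)) ≤ (1−γ) ( Σ_{x∈X} μ(x) V^{π_{i+1}}(x) − Σ_{x∈X} μ(x)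 V^{π_i}(x) ). (Corollary 1.) -/
/-!
With `Δ = V^{π_{i+1}} - V^{π_i}`, the flow equation for `d_{π_b}` turns `(1 - γ) 𝔼_μ Δ` into
`𝔼_{d_{π_b}} (Δ - γ P_{π_b} Δ)`. Expanding both Bellman equations at actions drawn from `π_b`, the
rewards cancel and `Δ - γ P_{π_b} Δ` equals the `π_b`-averaged advantage of `π_i` plus
`∑_u (π_{i+1} - π_b)(u|x) Q^{π_{i+1}}(x,u)`. Since rewards lie in `[0, 1]`, `|Q^{π_{i+1}}| ≤ 1/(1 - γ)`,
so this last term is at least `-(2/(1 - γ)) D_TV(π_b(·|x), π_{i+1}(·|x))`.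
-/

open Finset

section WeightedSum

variable {ι : Type*} [Fintype ι] {f : ι → ℝ} {B : ℝ}

theorem sum_mul_le_of_forall_le {w : ι → ℝ} (hw : ∀ i, 0 ≤ w i) (hw_sum : ∑ i, w i = 1)
    (hf : ∀ i, f i ≤ B) : ∑ i, w i * f i ≤ B :=
  calc ∑ i, w i * f i ≤ ∑ i, w i * B :=
        sum_le_sum fun i _ => mul_le_mul_of_nonneg_left (hf i) (hw i)
    _ = B := by rw [← sum_mul, hw_sum, one_mul]

theorem sum_mul_le_mul_sum_abs {c : ι → ℝ} (hf : ∀ i, |f i| ≤ B) :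
    ∑ i, c i * f i ≤ B * ∑ i, |c i| := by
  rw [mul_sum]
  refine sum_le_sum fun i _ => (le_abs_self _).trans ?_
  rw [abs_mul, mul_comm B]
  exact mul_le_mul_of_nonneg_left (hf i) (abs_nonneg _)

end WeightedSum

section MDP

variable {X U : Type*} [Fintype X] [Fintype U] {γ : ℝ} {p : X → U → X → ℝ}

def value (π Q : X → U → ℝ) (x : X) : ℝ := ∑ u, π x u * Q x u

/-- `(P_π g)(x)`. -/
def nextValue (p : X → U → X → ℝ) (π : X → U → ℝ) (g : X → ℝ) (x : X) : ℝ :=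
  ∑ u, π x u * ∑ x', p x u x' * g x'

theorem nextValue_sub (π : X → U → ℝ) (g h : X → ℝ) (x : X) :
    nextValue p π (g - h) x = nextValue p π g x - nextValue p π h x := by
  simp only [nextValue, Pi.sub_apply, mul_sub, sum_sub_distrib]

variable {r π Q : X → U → ℝ}

theorem le_div_one_sub_of_bellman {c : ℝ} (hγ0 : 0 ≤ γ) (hγ1 : γ < 1)
    (hp_nonneg : ∀ x u x', 0 ≤ p x u x') (hp_sum : ∀ x u, ∑ x', p x u x' = 1)
    (hπ_nonneg : ∀ x u, 0 ≤ π x u) (hπ_sum : ∀ x, ∑ u, π x u = 1) (hr : ∀ x u, r x u ≤ c)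
    (hQ : ∀ x u, Q x u = r x u + γ * ∑ x', p x u x' * value π Q x') (x : X) (u : U) :
    Q x u ≤ c / (1 - γ) := by
  obtain ⟨m, -, hm⟩ :=
    exists_max_image univ (fun q : X × U => Q q.1 q.2) ⟨(x, u), mem_univ _⟩
  have hmax : ∀ x u, Q x u ≤ Q m.1 m.2 := fun x u => hm (x, u) (mem_univ _)
  have hnext : ∑ x', p m.1 m.2 x' * value π Q x' ≤ Q m.1 m.2 :=
    sum_mul_le_of_forall_le (hp_nonneg _ _) (hp_sum _ _) fun x' =>
      sum_mul_le_of_forall_le (hπ_nonneg x') (hπ_sum x') (hmax x')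
  have hbellman := hQ m.1 m.2
  have hγnext := mul_le_mul_of_nonneg_left hnext hγ0
  refine (hmax x u).trans ((le_div_iff₀ (by linarith)).2 ?_)
  linarith [hr m.1 m.2]

theorem abs_le_div_one_sub_of_bellman {c : ℝ} (hγ0 : 0 ≤ γ) (hγ1 : γ < 1)
    (hp_nonneg : ∀ x u x', 0 ≤ p x u x') (hp_sum : ∀ x u, ∑ x', p x u x' = 1)
    (hπ_nonneg : ∀ x u, 0 ≤ π x u) (hπ_sum : ∀ x, ∑ u, π x u = 1) (hr : ∀ x u, |r x u| ≤ c)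
    (hQ : ∀ x u, Q x u = r x u + γ * ∑ x', p x u x' * value π Q x') (x : X) (u : U) :
    |Q x u| ≤ c / (1 - γ) := by
  have hQ_neg : ∀ x u, -Q x u = -r x u + γ * ∑ x', p x u x' * value π (-Q) x' := by
    intro x u
    simp only [hQ x u, value, Pi.neg_apply, mul_neg, sum_neg_distrib]
    ring
  refine abs_le.2 ⟨?_, ?_⟩
  · have := le_div_one_sub_of_bellman hγ0 hγ1 hp_nonneg hp_sum hπ_nonneg hπ_sum
      (fun x u => neg_le.1 (neg_abs_le (r x u)) |>.trans (hr x u)) hQ_neg x u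
    linarith
  · exact le_div_one_sub_of_bellman hγ0 hγ1 hp_nonneg hp_sum hπ_nonneg hπ_sum
      (fun x u => (le_abs_self _).trans (hr x u)) hQ x u

theorem sum_mul_eq_of_bellman (hQ : ∀ x u, Q x u = r x u + γ * ∑ x', p x u x' * value π Q x')
    (π' : X → U → ℝ) (x : X) :
    ∑ u, π' x u * Q x u = ∑ u, π' x u * r x u + γ * nextValue p π' (value π Q) x := by
  simp only [hQ x, nextValue, mul_add, sum_add_distrib, mul_sum]
  congr 1
  exact sum_congr rfl fun u _ => sum_congr rfl fun x' _ => by ring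

theorem sum_visitation_mul_sub_nextValue {μ d : X → ℝ}
    (hd : ∀ x', d x' = (1 - γ) * μ x' + γ * ∑ x, ∑ u, d x * π x u * p x u x') (g : X → ℝ) :
    ∑ x, d x * (g x - γ * nextValue p π g x) = (1 - γ) * ∑ x, μ x * g x := by
  have hswap : ∑ x', (∑ x, ∑ u, d x * π x u * p x u x') * g x' =
      ∑ x, d x * nextValue p π g x := by
    simp only [nextValue, sum_mul, mul_sum]
    rw [sum_comm]
    refine sum_congr rfl fun x _ => ?_
    rw [sum_comm]
    exact sum_congr rfl fun u _ => sum_congr rfl fun x' _ => by ring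
  have hflow : ∑ x, d x * g x =
      (1 - γ) * ∑ x, μ x * g x + γ * ∑ x, d x * nextValue p π g x := by
    conv_lhs => rw [sum_congr rfl fun x _ => congrArg (· * g x) (hd x)]
    rw [← hswap]
    simp only [add_mul, sum_add_distrib, mul_assoc, ← mul_sum]
  have hsplit : ∑ x, d x * (g x - γ * nextValue p π g x) =
      ∑ x, d x * g x - γ * ∑ x, d x * nextValue p π g x := by
    rw [mul_sum, ← sum_sub_distrib]
    exact sum_congr rfl fun x _ => by ring
  linarith

theorem advantage_sub_le_value_sub {πb πi πi1 Qi Qi1 : X → U → ℝ} {B : ℝ}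
    (hπb_sum : ∀ x, ∑ u, πb x u = 1)
    (hQi : ∀ x u, Qi x u = r x u + γ * ∑ x', p x u x' * value πi Qi x')
    (hQi1 : ∀ x u, Qi1 x u = r x u + γ * ∑ x', p x u x' * value πi1 Qi1 x')
    (hB : ∀ x u, |Qi1 x u| ≤ B) (x : X) :
    ∑ u, πb x u * (Qi x u - value πi Qi x) - B * ∑ u, |πb x u - πi1 x u| ≤
      (value πi1 Qi1 - value πi Qi) x -
        γ * nextValue p πb (value πi1 Qi1 - value πi Qi) x := by
  have hadv : ∑ u, πb x u * (Qi x u - value πi Qi x) = ∑ u, πb x u * Qi x u - value πi Qi x := by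
    simp only [mul_sub, sum_sub_distrib, ← sum_mul, hπb_sum, one_mul]
  have hmix : ∑ u, (πb x u - πi1 x u) * Qi1 x u = ∑ u, πb x u * Qi1 x u - value πi1 Qi1 x := by
    simp only [value, sub_mul, sum_sub_distrib]
  have hbound := sum_mul_le_mul_sum_abs (c := fun u => πb x u - πi1 x u) (hB x)
  rw [nextValue_sub, Pi.sub_apply]
  linarith [sum_mul_eq_of_bellman hQi πb x, sum_mul_eq_of_bellman hQi1 πb x]

end MDP

theorem policy_improvement_tv_bound_general
    {X U : Type*} [Fintype X] [Fintype U]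
    (γ : ℝ) (hγ0 : 0 ≤ γ) (hγ1 : γ < 1)
    (p : X → U → X → ℝ)
    (hp_nonneg : ∀ x u x', 0 ≤ p x u x')
    (hp_sum : ∀ x u, ∑ x', p x u x' = 1)
    (r : X → U → ℝ)
    (hr0 : ∀ x u, 0 ≤ r x u) (hr1 : ∀ x u, r x u ≤ 1)
    (πb πi πi1 : X → U → ℝ)
    (hπb_sum : ∀ x, ∑ u, πb x u = 1)
    (hπi1_nonneg : ∀ x u, 0 ≤ πi1 x u) (hπi1_sum : ∀ x, ∑ u, πi1 x u = 1)
    (Qi Qi1 : X → U → ℝ)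
    (hQi : ∀ x u, Qi x u = r x u + γ * ∑ x', p x u x' * ∑ u', πi x' u' * Qi x' u')
    (hQi1 : ∀ x u, Qi1 x u = r x u + γ * ∑ x', p x u x' * ∑ u', πi1 x' u' * Qi1 x' u')
    (μ : X → ℝ)
    (d : X → ℝ)
    (hd_flow : ∀ x', d x' = (1 - γ) * μ x' + γ * ∑ x, ∑ u, d x * πb x u * p x u x')
    (hd_nonneg : ∀ x, 0 ≤ d x) :
    (∑ x, d x * ∑ u, πb x u * (Qi x u - ∑ u', πi x u' * Qi x u')) -
        (2 / (1 - γ)) * ∑ x, d x * ((1 / 2) * ∑ u, |πb x u - πi1 x u|) ≤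
      (1 - γ) *
        ((∑ x, μ x * ∑ u, πi1 x u * Qi1 x u) - ∑ x, μ x * ∑ u, πi x u * Qi x u) := by
  set Δ := value πi1 Qi1 - value πi Qi
  have hQi1_abs : ∀ x u, |Qi1 x u| ≤ 1 / (1 - γ) :=
    abs_le_div_one_sub_of_bellman hγ0 hγ1 hp_nonneg hp_sum hπi1_nonneg hπi1_sum
      (fun x u => abs_le.2 ⟨by linarith [hr0 x u], hr1 x u⟩) hQi1
  calc _ = ∑ x, d x * (∑ u, πb x u * (Qi x u - value πi Qi x) -
          1 / (1 - γ) * ∑ u, |πb x u - πi1 x u|) := by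
        rw [mul_sum, ← sum_sub_distrib]
        exact sum_congr rfl fun x _ => by simp only [value]; ring
    _ ≤ ∑ x, d x * (Δ x - γ * nextValue p πb Δ x) :=
        sum_le_sum fun x _ => mul_le_mul_of_nonneg_left
          (advantage_sub_le_value_sub hπb_sum hQi hQi1 hQi1_abs x) (hd_nonneg x)
    _ = (1 - γ) * ∑ x, μ x * Δ x := sum_visitation_mul_sub_nextValue hd_flow Δ
    _ = _ := by simp only [Δ, value, Pi.sub_apply, mul_sub, sum_sub_distrib]

/-- **Corollary 1.**
For a finite MDP with rewards in `[0,1]`, policies `πb` (behavior), `πi`, `πi1` with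
Bellman-consistent Q-functions, and `d` the discounted state visitation distribution
of `πb`:
`Σ_x d(x) Σ_u πb(u|x) A^{πi}(x,u) − (2/(1−γ)) Σ_x d(x) D_TV(πb(·|x), πi1(·|x))
  ≤ (1−γ) (Σ_x μ(x) V^{πi1}(x) − Σ_x μ(x) V^{πi}(x))`,
where `D_TV(P,Q) = (1/2) Σ_u |P u − Q u|`. -/
theorem policy_improvement_tv_bound
    {X U : Type*} [Fintype X] [Fintype U] [Nonempty X] [Nonempty U]
    (γ : ℝ) (hγ0 : 0 ≤ γ) (hγ1 : γ < 1)
    (p : X → U → X → ℝ)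
    (hp_nonneg : ∀ x u x', 0 ≤ p x u x')
    (hp_sum : ∀ x u, ∑ x', p x u x' = 1)
    (r : X → U → ℝ)
    (hr0 : ∀ x u, 0 ≤ r x u) (hr1 : ∀ x u, r x u ≤ 1)
    (πb πi πi1 : X → U → ℝ)
    (hπb_nonneg : ∀ x u, 0 ≤ πb x u) (hπb_sum : ∀ x, ∑ u, πb x u = 1)
    (hπi_nonneg : ∀ x u, 0 ≤ πi x u) (hπi_sum : ∀ x, ∑ u, πi x u = 1)
    (hπi1_nonneg : ∀ x u, 0 ≤ πi1 x u) (hπi1_sum : ∀ x, ∑ u, πi1 x u = 1)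
    (Qb Qi Qi1 : X → U → ℝ)
    (hQb : ∀ x u, Qb x u = r x u + γ * ∑ x', p x u x' * ∑ u', πb x' u' * Qb x' u')
    (hQi : ∀ x u, Qi x u = r x u + γ * ∑ x', p x u x' * ∑ u', πi x' u' * Qi x' u')
    (hQi1 : ∀ x u, Qi1 x u = r x u + γ * ∑ x', p x u x' * ∑ u', πi1 x' u' * Qi1 x' u')
    (μ : X → ℝ) (hμ_nonneg : ∀ x, 0 ≤ μ x) (hμ_sum : ∑ x, μ x = 1)
    (d : X → ℝ)
    (hd_flow : ∀ x', d x' = (1 - γ) * μ x' + γ * ∑ x, ∑ u, d x * πb x u * p x u x')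
    (hd_nonneg : ∀ x, 0 ≤ d x) (hd_sum : ∑ x, d x = 1) :
    (∑ x, d x * ∑ u, πb x u * (Qi x u - ∑ u', πi x u' * Qi x u')) -
        (2 / (1 - γ)) * ∑ x, d x * ((1 / 2) * ∑ u, |πb x u - πi1 x u|) ≤
      (1 - γ) *
        ((∑ x, μ x * ∑ u, πi1 x u * Qi1 x u) - ∑ x, μ x * ∑ u, πi x u * Qi x u) :=
  policy_improvement_tv_bound_general γ hγ0 hγ1 p hp_nonneg hp_sum r hr0 hr1 πb πi πi1 hπb_sum
    hπi1_nonneg hπi1_sum Qi Qi1 hQi hQi1 μ d hd_flow hd_nonneg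
end

section
/- Let (X,U,p,r,γ) be a finite MDP with rewards satisfying 0 ≤ r(x,u) ≤ 1 for all (x,u). Let π_b and π_{i+1} be policies whose state–action value functions satisfy their Bellman equations, with value functions V^{π_b} and V^{π_{i+1}}. Let μ be a probability mass function on X and d_{π_b} the discounted state visitation distribution of π_b with initial distribution μ. Then (1−γ) ( Σ_{x∈X} μ(x) V^{π_b}(x) − Σ_{x∈X} μ(x) V^{π_{i+1}}(x) ) ≤ (1/(1−γ)) Σ_{x∈X} d_{π_b}(x) Σ_{u∈U} |π_b(u|x) − π_{i+1}(u|x)|. (Intermediate inequality in the proof of Corollary 1.) -/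
open Finset

/-- **Intermediate inequality in the proof of Corollary 1.**
For a finite MDP with rewards in `[0,1]`, policies `πb`, `πi1` with Bellman-consistent
Q-functions, and `d` the discounted state visitation distribution of `πb`:
`(1−γ)(Σ_x μ(x) V^{πb}(x) − Σ_x μ(x) V^{πi1}(x))
  ≤ (1/(1−γ)) Σ_x d(x) Σ_u |πb(u|x) − πi1(u|x)|`. -/
theorem value_gap_l1_bound
    {X U : Type*} [Fintype X] [Fintype U] [Nonempty X] [Nonempty U]
    (γ : ℝ) (hγ0 : 0 ≤ γ) (hγ1 : γ < 1)
    (p : X → U → X → ℝ)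
    (hp_nonneg : ∀ x u x', 0 ≤ p x u x')
    (hp_sum : ∀ x u, ∑ x', p x u x' = 1)
    (r : X → U → ℝ)
    (hr0 : ∀ x u, 0 ≤ r x u) (hr1 : ∀ x u, r x u ≤ 1)
    (πb πi1 : X → U → ℝ)
    (hπb_nonneg : ∀ x u, 0 ≤ πb x u) (hπb_sum : ∀ x, ∑ u, πb x u = 1)
    (hπi1_nonneg : ∀ x u, 0 ≤ πi1 x u) (hπi1_sum : ∀ x, ∑ u, πi1 x u = 1)
    (Qb Qi1 : X → U → ℝ)
    (hQb : ∀ x u, Qb x u = r x u + γ * ∑ x', p x u x' * ∑ u', πb x' u' * Qb x' u')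
    (hQi1 : ∀ x u, Qi1 x u = r x u + γ * ∑ x', p x u x' * ∑ u', πi1 x' u' * Qi1 x' u')
    (μ : X → ℝ) (hμ_nonneg : ∀ x, 0 ≤ μ x) (hμ_sum : ∑ x, μ x = 1)
    (d : X → ℝ)
    (hd_flow : ∀ x', d x' = (1 - γ) * μ x' + γ * ∑ x, ∑ u, d x * πb x u * p x u x')
    (hd_nonneg : ∀ x, 0 ≤ d x) (hd_sum : ∑ x, d x = 1) :
    (1 - γ) *
        ((∑ x, μ x * ∑ u, πb x u * Qb x u) - ∑ x, μ x * ∑ u, πi1 x u * Qi1 x u) ≤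
      (1 / (1 - γ)) * ∑ x, d x * ∑ u, |πb x u - πi1 x u| := by
  have h1γ : 0 < 1 - γ := by linarith
  set C : ℝ := 1 / (1 - γ) with hC
  have hC0 : 0 < C := by positivity
  set Vb : X → ℝ := fun x => ∑ u, πb x u * Qb x u with hVb
  set Vi : X → ℝ := fun x => ∑ u, πi1 x u * Qi1 x u with hVi
  have hQi1' : ∀ x u, Qi1 x u = r x u + γ * ∑ x', p x u x' * Vi x' := fun x u => hQi1 x u
  have hQb' : ∀ x u, Qb x u = r x u + γ * ∑ x', p x u x' * Vb x' := fun x u => hQb x u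
  -- bound |Qi1| ≤ C
  have hne : (Finset.univ : Finset (X × U)).Nonempty := Finset.univ_nonempty
  set M : ℝ := Finset.univ.sup' hne (fun xu : X × U => |Qi1 xu.1 xu.2|) with hM
  have hle : ∀ x u, |Qi1 x u| ≤ M := fun x u =>
    Finset.le_sup' (fun xu : X × U => |Qi1 xu.1 xu.2|) (Finset.mem_univ (x, u))
  have hViM : ∀ x, |Vi x| ≤ M := by
    intro x
    calc |Vi x| ≤ ∑ u, |πi1 x u * Qi1 x u| := Finset.abs_sum_le_sum_abs _ _
    _ ≤ ∑ u, πi1 x u * M := by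
        apply Finset.sum_le_sum; intro u _
        rw [abs_mul, abs_of_nonneg (hπi1_nonneg x u)]
        exact mul_le_mul_of_nonneg_left (hle x u) (hπi1_nonneg x u)
    _ = M := by rw [← Finset.sum_mul, hπi1_sum, one_mul]
  have hMC : M ≤ C := by
    obtain ⟨xu, -, hxu⟩ := Finset.exists_mem_eq_sup' hne (fun xu : X × U => |Qi1 xu.1 xu.2|)
    rw [← hM] at hxu
    have h1 : M ≤ 1 + γ * M := by
      have key : |Qi1 xu.1 xu.2| ≤ 1 + γ * M := by
        rw [hQi1']
        calc |r xu.1 xu.2 + γ * ∑ x', p xu.1 xu.2 x' * Vi x'|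
            ≤ |r xu.1 xu.2| + |γ * ∑ x', p xu.1 xu.2 x' * Vi x'| := abs_add_le _ _
          _ ≤ 1 + γ * M := by
              have hr : |r xu.1 xu.2| ≤ 1 := by
                rw [abs_of_nonneg (hr0 _ _)]; exact hr1 _ _
              have hs : |∑ x', p xu.1 xu.2 x' * Vi x'| ≤ M := by
                calc |∑ x', p xu.1 xu.2 x' * Vi x'| ≤ ∑ x', |p xu.1 xu.2 x' * Vi x'| :=
                      Finset.abs_sum_le_sum_abs _ _
                  _ ≤ ∑ x', p xu.1 xu.2 x' * M := by
                      apply Finset.sum_le_sum; intro x' _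
                      rw [abs_mul, abs_of_nonneg (hp_nonneg _ _ _)]
                      exact mul_le_mul_of_nonneg_left (hViM x') (hp_nonneg _ _ _)
                  _ = M := by rw [← Finset.sum_mul, hp_sum, one_mul]
              rw [abs_mul, abs_of_nonneg hγ0]
              exact add_le_add hr (mul_le_mul_of_nonneg_left hs hγ0)
      calc M = |Qi1 xu.1 xu.2| := hxu
        _ ≤ 1 + γ * M := key
    rw [hC, le_div_iff₀ h1γ]
    nlinarith
  have hQC : ∀ x u, |Qi1 x u| ≤ C := fun x u => (hle x u).trans hMC
  -- advantage
  set g : X → ℝ := fun x => ∑ u, (πb x u - πi1 x u) * Qi1 x u with hg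
  -- Bellman identity for the difference
  have hΔ : ∀ x, Vb x - Vi x =
      g x + γ * ∑ x', (∑ u, πb x u * p x u x') * (Vb x' - Vi x') := by
    intro x
    have h2 : ∀ u, Qb x u - Qi1 x u = γ * ∑ x', p x u x' * (Vb x' - Vi x') := by
      intro u
      rw [hQb', hQi1']
      simp only [Finset.mul_sum, mul_sub, Finset.sum_sub_distrib]
      ring
    have h3 : ∑ u, πb x u * (Qb x u - Qi1 x u)
        = γ * ∑ x', (∑ u, πb x u * p x u x') * (Vb x' - Vi x') := by
      calc ∑ u, πb x u * (Qb x u - Qi1 x u)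
          = ∑ u, ∑ x', γ * (πb x u * (p x u x' * (Vb x' - Vi x'))) := by
            apply Finset.sum_congr rfl; intro u _
            rw [h2]
            simp only [Finset.mul_sum]
            exact Finset.sum_congr rfl fun x' _ => by ring
        _ = ∑ x', ∑ u, γ * (πb x u * (p x u x' * (Vb x' - Vi x'))) := Finset.sum_comm
        _ = γ * ∑ x', (∑ u, πb x u * p x u x') * (Vb x' - Vi x') := by
            simp only [Finset.mul_sum, Finset.sum_mul]
            apply Finset.sum_congr rfl; intro x' _
            apply Finset.sum_congr rfl; intro u _
            ring
    have h1 : Vb x - Vi x = g x + ∑ u, πb x u * (Qb x u - Qi1 x u) := by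
      rw [hVb, hVi, hg]
      simp only [mul_sub, sub_mul, Finset.sum_sub_distrib]
      ring
    rw [h1, h3]
  -- main identity: (1-γ) ∑ μ Δ = ∑ d g
  have hmain : (1 - γ) * ∑ x, μ x * (Vb x - Vi x) = ∑ x, d x * g x := by
    have hswap : ∑ x, d x * (γ * ∑ x', (∑ u, πb x u * p x u x') * (Vb x' - Vi x'))
        = γ * ∑ x', (∑ x, ∑ u, d x * πb x u * p x u x') * (Vb x' - Vi x') := by
      calc ∑ x, d x * (γ * ∑ x', (∑ u, πb x u * p x u x') * (Vb x' - Vi x'))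
          = ∑ x, ∑ x', ∑ u, γ * (d x * πb x u * p x u x' * (Vb x' - Vi x')) := by
            apply Finset.sum_congr rfl; intro x _
            simp only [Finset.mul_sum, Finset.sum_mul]
            apply Finset.sum_congr rfl; intro x' _
            apply Finset.sum_congr rfl; intro u _
            ring
        _ = ∑ x', ∑ x, ∑ u, γ * (d x * πb x u * p x u x' * (Vb x' - Vi x')) :=
            Finset.sum_comm
        _ = γ * ∑ x', (∑ x, ∑ u, d x * πb x u * p x u x') * (Vb x' - Vi x') := by
            simp only [Finset.mul_sum, Finset.sum_mul]
    have hdg : ∑ x, d x * g x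
        = ∑ x, d x * (Vb x - Vi x)
          - γ * ∑ x', (∑ x, ∑ u, d x * πb x u * p x u x') * (Vb x' - Vi x') := by
      rw [← hswap, ← Finset.sum_sub_distrib]
      apply Finset.sum_congr rfl; intro x _
      linear_combination (-(d x)) * (hΔ x)
    rw [hdg]
    have hγsum : γ * ∑ x', (∑ x, ∑ u, d x * πb x u * p x u x') * (Vb x' - Vi x')
        = ∑ x', γ * ((∑ x, ∑ u, d x * πb x u * p x u x') * (Vb x' - Vi x')) :=
      Finset.mul_sum _ _ _
    rw [hγsum, ← Finset.sum_sub_distrib, Finset.mul_sum]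
    apply Finset.sum_congr rfl; intro x' _
    linear_combination (Vi x' - Vb x') * (hd_flow x')
  -- finish
  have hLHS : (1 - γ) * ((∑ x, μ x * Vb x) - ∑ x, μ x * Vi x)
      = ∑ x, d x * g x := by
    rw [← hmain]
    congr 1
    rw [← Finset.sum_sub_distrib]
    exact Finset.sum_congr rfl fun x _ => by ring
  rw [hLHS]
  have hbound : ∀ x, g x ≤ C * ∑ u, |πb x u - πi1 x u| := by
    intro x
    calc g x ≤ |g x| := le_abs_self _
      _ ≤ ∑ u, |(πb x u - πi1 x u) * Qi1 x u| := Finset.abs_sum_le_sum_abs _ _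
      _ ≤ ∑ u, |πb x u - πi1 x u| * C := by
          apply Finset.sum_le_sum; intro u _
          rw [abs_mul]
          exact mul_le_mul_of_nonneg_left (hQC x u) (abs_nonneg _)
      _ = C * ∑ u, |πb x u - πi1 x u| := by
          rw [Finset.mul_sum]; exact Finset.sum_congr rfl fun u _ => by ring
  calc ∑ x, d x * g x ≤ ∑ x, d x * (C * ∑ u, |πb x u - πi1 x u|) := by
        apply Finset.sum_le_sum; intro x _
        exact mul_le_mul_of_nonneg_left (hbound x) (hd_nonneg x)
    _ = C * ∑ x, d x * ∑ u, |πb x u - πi1 x u| := by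
        rw [Finset.mul_sum]; exact Finset.sum_congr rfl fun x _ => by ring
end

section
/- Let X be a nonempty finite state space, U a nonempty finite action space, p a transition kernel on X × U, γ ∈ [0,1), π a policy, and μ a probability mass function on X. Then there exists a unique function d : X → ℝ satisfying the flow equation d(x′) = (1−γ) μ(x′) + γ Σ_{x∈X} Σ_{u∈U} d(x) π(u|x) p(x′|x,u) for all x′ ∈ X; moreover this unique solution satisfies d(x) ≥ 0 for all x ∈ X and Σ_{x∈X} d(x) = 1. (Well-definedness of the discounted state visitation distribution.) -/
/-!
Write `P x x' = ∑ u, π(u|x) p(x'|x,u)` for the row-stochastic state transition matrix of `π`;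
the flow equation reads `d = (1 - γ) μ + γ dP`. Right multiplication by `P` does not increase
`∑ |d|` and preserves `∑ d`. Hence a nonnegative `f` with `f ≤ γ fP` satisfies
`∑ f ≤ γ ∑ f`, so `f = 0`. Applied to `|v|` for `v = γ vP`, this makes `v ↦ v - γ vP` an
injective, hence bijective, linear endomorphism of `ℝ^X`: existence and uniqueness.
Applied to the negative part of a solution it gives nonnegativity, and summing the flow
equation gives `∑ d = (1 - γ) + γ ∑ d`.
-/

open Finset

namespace Matrix

variable {n : Type*} [Fintype n] {P : Matrix n n ℝ} {γ : ℝ}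

lemma vecMul_mono_of_nonneg (hP : ∀ i j, 0 ≤ P i j) {v w : n → ℝ} (hvw : v ≤ w) :
    v ᵥ* P ≤ w ᵥ* P :=
  fun j => sum_le_sum fun i _ => mul_le_mul_of_nonneg_right (hvw i) (hP i j)

lemma abs_vecMul_le_of_nonneg (hP : ∀ i j, 0 ≤ P i j) (v : n → ℝ) : |v ᵥ* P| ≤ |v| ᵥ* P := by
  intro j
  simp only [Pi.abs_apply, vecMul, dotProduct]
  refine (abs_sum_le_sum_abs _ _).trans_eq (sum_congr rfl fun i _ => ?_)
  rw [abs_mul, abs_of_nonneg (hP i j)]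

variable [DecidableEq n]

lemma sum_vecMul_of_mem_rowStochastic (hP : P ∈ rowStochastic ℝ n) (v : n → ℝ) :
    ∑ j, (v ᵥ* P) j = ∑ i, v i := by
  rw [← dotProduct_one, ← dotProduct_mulVec, one_vecMul_of_mem_rowStochastic hP, dotProduct_one]

lemma eq_zero_of_le_smul_vecMul (hP : P ∈ rowStochastic ℝ n) (hγ : γ < 1) {f : n → ℝ}
    (hf : 0 ≤ f) (hle : f ≤ γ • (f ᵥ* P)) : f = 0 := by
  have hsum : ∑ i, f i ≤ γ * ∑ i, f i := by
    calc ∑ i, f i ≤ ∑ j, γ * (f ᵥ* P) j := sum_le_sum fun j _ => hle j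
      _ = γ * ∑ i, f i := by rw [← mul_sum, sum_vecMul_of_mem_rowStochastic hP]
  have hsum_nonneg : 0 ≤ ∑ i, f i := sum_nonneg fun i _ => hf i
  have hsum_zero : ∑ i, f i = 0 := by nlinarith
  funext i
  exact (sum_eq_zero_iff_of_nonneg fun j _ => hf j).1 hsum_zero i (mem_univ i)

lemma injective_id_sub_smul_vecMulLinear (hP : P ∈ rowStochastic ℝ n) (hγ : |γ| < 1) :
    Function.Injective (LinearMap.id - γ • P.vecMulLinear : (n → ℝ) →ₗ[ℝ] n → ℝ) := by
  rw [← LinearMap.ker_eq_bot, LinearMap.ker_eq_bot']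
  intro v hv
  have hfix : v = γ • (v ᵥ* P) := sub_eq_zero.1 hv
  have habs : |v| ≤ |γ| • (|v| ᵥ* P) := by
    intro j
    calc |v| j = |γ| * |(v ᵥ* P) j| := by
          conv_lhs => rw [hfix]
          simp [abs_mul]
      _ ≤ |γ| * (|v| ᵥ* P) j :=
          mul_le_mul_of_nonneg_left (abs_vecMul_le_of_nonneg hP.1 v j) (abs_nonneg γ)
  have habs_zero := eq_zero_of_le_smul_vecMul hP hγ (abs_nonneg v) habs
  exact funext fun i => abs_eq_zero.1 (congrFun habs_zero i)

theorem existsUnique_eq_add_smul_vecMul (hP : P ∈ rowStochastic ℝ n) (hγ : |γ| < 1)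
    (b : n → ℝ) : ∃! d : n → ℝ, d = b + γ • (d ᵥ* P) := by
  have hinj := injective_id_sub_smul_vecMulLinear hP hγ
  have hbij : Function.Bijective (LinearMap.id - γ • P.vecMulLinear : (n → ℝ) →ₗ[ℝ] n → ℝ) :=
    ⟨hinj, LinearMap.injective_iff_surjective.1 hinj⟩
  simpa [sub_eq_iff_eq_add] using hbij.existsUnique b

lemma nonneg_of_eq_add_smul_vecMul (hP : P ∈ rowStochastic ℝ n) (hγ0 : 0 ≤ γ) (hγ1 : γ < 1)
    {b d : n → ℝ} (hb : 0 ≤ b) (hd : d = b + γ • (d ᵥ* P)) : 0 ≤ d := by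
  have hvecMul_nonneg : 0 ≤ d⁻ ᵥ* P :=
    nonneg_vecMul_of_mem_rowStochastic hP fun i => negPart_nonneg (d i)
  have hle : d⁻ ≤ γ • (d⁻ ᵥ* P) := by
    intro j
    rw [Pi.negPart_apply, negPart_def]
    refine sup_le ?_ (mul_nonneg hγ0 (hvecMul_nonneg j))
    have hneg : (-d) ᵥ* P ≤ d⁻ ᵥ* P := vecMul_mono_of_nonneg hP.1 (neg_le_negPart d)
    have hscaled := mul_le_mul_of_nonneg_left (hneg j) hγ0
    have hdj := congrFun hd j
    simp only [Pi.add_apply, Pi.smul_apply, smul_eq_mul, neg_vecMul, Pi.neg_apply, mul_neg]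
      at hdj hscaled ⊢
    linarith [show 0 ≤ b j from hb j]
  exact negPart_eq_zero.1 (eq_zero_of_le_smul_vecMul hP hγ1 (negPart_nonneg d) hle)

lemma sum_eq_of_eq_smul_add_smul_vecMul (hP : P ∈ rowStochastic ℝ n) (hγ : γ ≠ 1)
    {μ d : n → ℝ} (hd : d = (1 - γ) • μ + γ • (d ᵥ* P)) : ∑ i, d i = ∑ i, μ i := by
  have hsum : ∑ i, d i = (1 - γ) * ∑ i, μ i + γ * ∑ i, d i := by
    conv_lhs => rw [hd]
    simp only [Pi.add_apply, Pi.smul_apply, smul_eq_mul, sum_add_distrib, ← mul_sum,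
      sum_vecMul_of_mem_rowStochastic hP]
  have hγ' : 1 - γ ≠ 0 := sub_ne_zero.2 hγ.symm
  exact mul_left_cancel₀ hγ' (by linarith)

end Matrix

open Matrix

def policyTransition {X U : Type*} [Fintype U] (p : X → U → X → ℝ) (π : X → U → ℝ) :
    Matrix X X ℝ :=
  Matrix.of fun x x' => ∑ u, π x u * p x u x'

section PolicyTransition

variable {X U : Type*} [Fintype X] [Fintype U]

lemma policyTransition_mem_rowStochastic [DecidableEq X] {p : X → U → X → ℝ} {π : X → U → ℝ}
    (hp_nonneg : ∀ x u x', 0 ≤ p x u x') (hp_sum : ∀ x u, ∑ x', p x u x' = 1)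
    (hπ_nonneg : ∀ x u, 0 ≤ π x u) (hπ_sum : ∀ x, ∑ u, π x u = 1) :
    policyTransition p π ∈ rowStochastic ℝ X := by
  refine mem_rowStochastic_iff_sum.2 ⟨fun x x' => ?_, fun x => ?_⟩
  · exact sum_nonneg fun u _ => mul_nonneg (hπ_nonneg x u) (hp_nonneg x u x')
  · simp only [policyTransition, of_apply]
    rw [sum_comm]
    simp [← mul_sum, hp_sum, hπ_sum]

lemma vecMul_policyTransition_apply (p : X → U → X → ℝ) (π : X → U → ℝ) (d : X → ℝ) (x' : X) :
    (d ᵥ* policyTransition p π) x' = ∑ x, ∑ u, d x * π x u * p x u x' := by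
  simp [vecMul, dotProduct, policyTransition, mul_sum, mul_assoc]

end PolicyTransition

theorem discounted_visitation_exists_unique_general
    {X U : Type*} [Fintype X] [Fintype U]
    (γ : ℝ) (hγ0 : 0 ≤ γ) (hγ1 : γ < 1)
    (p : X → U → X → ℝ)
    (hp_nonneg : ∀ x u x', 0 ≤ p x u x')
    (hp_sum : ∀ x u, ∑ x', p x u x' = 1)
    (π : X → U → ℝ)
    (hπ_nonneg : ∀ x u, 0 ≤ π x u) (hπ_sum : ∀ x, ∑ u, π x u = 1)
    (μ : X → ℝ) (hμ_nonneg : ∀ x, 0 ≤ μ x) (hμ_sum : ∑ x, μ x = 1) :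
    (∃! d : X → ℝ,
        ∀ x', d x' = (1 - γ) * μ x' + γ * ∑ x, ∑ u, d x * π x u * p x u x') ∧
      ∀ d : X → ℝ,
        (∀ x', d x' = (1 - γ) * μ x' + γ * ∑ x, ∑ u, d x * π x u * p x u x') →
          (∀ x, 0 ≤ d x) ∧ ∑ x, d x = 1 := by
  classical
  have hP := policyTransition_mem_rowStochastic hp_nonneg hp_sum hπ_nonneg hπ_sum
  have hflow : ∀ d : X → ℝ,
      (∀ x', d x' = (1 - γ) * μ x' + γ * ∑ x, ∑ u, d x * π x u * p x u x') ↔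
        d = (1 - γ) • μ + γ • (d ᵥ* policyTransition p π) := by
    intro d
    simp [funext_iff, vecMul_policyTransition_apply]
  have hμ0 : 0 ≤ (1 - γ) • μ := smul_nonneg (by linarith) hμ_nonneg
  simp only [hflow]
  refine ⟨existsUnique_eq_add_smul_vecMul hP (abs_lt.2 ⟨by linarith, by linarith⟩) _,
    fun d hd => ⟨nonneg_of_eq_add_smul_vecMul hP hγ0 hγ1 hμ0 hd, ?_⟩⟩
  rw [sum_eq_of_eq_smul_add_smul_vecMul hP hγ1.ne hd, hμ_sum]

/-- **Well-definedness of the discounted state visitation distribution.**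
Given a finite MDP `(X, U, p, γ)`, a policy `π`, and an initial distribution `μ`,
there is a unique `d : X → ℝ` satisfying the flow equation
`d(x') = (1−γ) μ(x') + γ Σ_x Σ_u d(x) π(u|x) p(x'|x,u)` for all `x'`;
moreover this unique solution is nonnegative and sums to `1`. -/
theorem discounted_visitation_exists_unique
    {X U : Type*} [Fintype X] [Fintype U] [Nonempty X] [Nonempty U]
    (γ : ℝ) (hγ0 : 0 ≤ γ) (hγ1 : γ < 1)
    (p : X → U → X → ℝ)
    (hp_nonneg : ∀ x u x', 0 ≤ p x u x')
    (hp_sum : ∀ x u, ∑ x', p x u x' = 1)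
    (π : X → U → ℝ)
    (hπ_nonneg : ∀ x u, 0 ≤ π x u) (hπ_sum : ∀ x, ∑ u, π x u = 1)
    (μ : X → ℝ) (hμ_nonneg : ∀ x, 0 ≤ μ x) (hμ_sum : ∑ x, μ x = 1) :
    (∃! d : X → ℝ,
        ∀ x', d x' = (1 - γ) * μ x' + γ * ∑ x, ∑ u, d x * π x u * p x u x') ∧
      ∀ d : X → ℝ,
        (∀ x', d x' = (1 - γ) * μ x' + γ * ∑ x, ∑ u, d x * π x u * p x u x') →
          (∀ x, 0 ≤ d x) ∧ ∑ x, d x = 1 :=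
  discounted_visitation_exists_unique_general γ hγ0 hγ1 p hp_nonneg hp_sum π hπ_nonneg hπ_sum μ
    hμ_nonneg hμ_sum
end
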